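/- Let n ≥ 2 and let J be a monic polynomial of degree n−1 satisfying ∫₀¹ t(1−t) J(t) q(t) dt = 0 for every polynomial q of degree at most n−2 (i.e. J is the monic Jacobi polynomial of degree n−1 orthogonal on [0,1] with respect to the weight t(1−t)). Set u(t) = t(t−1)J(t). Then F_{n,k}^1(u) = 0 for all k = 0,1,…,n; consequently L_n^1 u = 0 and u = e_{n+1} − L_n^1 e_{n+1}, where e_{n+1}(x) = x^{n+1}. -/

import Mathlib

open MeasureTheory

/-- Euler Beta function `B(a,b) = ∫₀¹ t^(a-1) (1-t)^(b-1) dt`. -/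
noncomputable def betaFn (a b : ℝ) : ℝ :=
  ∫ t in (0:ℝ)..1, t ^ (a - 1) * (1 - t) ^ (b - 1)

/-- The functionals `F_{n,k}^ρ`. -/
noncomputable def Ffun (n k : ℕ) (ρ : ℝ) (f : ℝ → ℝ) : ℝ :=
  if k = 0 then f 0
  else if k = n then f 1
  else (betaFn ((k : ℝ) * ρ) (((n : ℝ) - (k : ℝ)) * ρ))⁻¹ *
    ∫ t in (0:ℝ)..1, t ^ ((k : ℝ) * ρ - 1) * (1 - t) ^ (((n : ℝ) - (k : ℝ)) * ρ - 1) * f t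

/-- Bernstein basis polynomial `p_{n,k}(x)`. -/
noncomputable def bern (n k : ℕ) (x : ℝ) : ℝ :=
  (n.choose k : ℝ) * x ^ k * (1 - x) ^ (n - k)

/-- The operator `U_n^ρ`. -/
noncomputable def Uop (n : ℕ) (ρ : ℝ) (f : ℝ → ℝ) (x : ℝ) : ℝ :=
  ∑ k ∈ Finset.range (n + 1), Ffun n k ρ f * bern n k x

/-!
For `0 < k < n`, `F_{n,k}^1` is, up to the positive factor `1 / B(k, n - k)`, integration against
`t^(k-1) (1-t)^(n-k-1)`. Since `u = -t(1-t) J`, these are the weighted inner products of `J` with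
polynomials of degree `n - 2`, so they vanish; and `u` vanishes at `0` and `1`.

Conversely, a polynomial `L` of degree `≤ n` killed by every `F_{n,k}^1` vanishes at `0` and `1`,
so `L = t(t-1) M` with `deg M ≤ n - 2`, and `M` is orthogonal for the weight `t(1-t)` to every
`t^i (1-t)^(n-2-i)`. These span `Π_{n-2}` (expand `t^j (t + (1-t))^(n-2-j)`), so
`∫₀¹ t(1-t) M² = 0` and `M = 0`. Applied to `e_{n+1} - u - L'`, which has degree `≤ n` because
`u` is monic of degree `n + 1`, this gives `u = e_{n+1} - L'`.
-/

open Polynomial Set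

namespace Polynomial

section CommRing

variable {R : Type*} [CommRing R]

theorem X_mul_X_sub_one_dvd {p : R[X]} (h0 : p.eval 0 = 0) (h1 : p.eval 1 = 0) :
    X * (X - 1) ∣ p := by
  obtain ⟨q, rfl⟩ : X ∣ p := by rwa [X_dvd_iff, coeff_zero_eq_eval_zero]
  obtain ⟨r, rfl⟩ : X - C 1 ∣ q := dvd_iff_isRoot.mpr (by simpa using h1)
  exact ⟨r, by rw [C_1, mul_assoc]⟩

theorem isMonicOfDegree_X_mul_X_sub_one [Nontrivial R] : IsMonicOfDegree (X * (X - 1) : R[X]) 2 :=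
  (isMonicOfDegree_X R).mul (by simpa using isMonicOfDegree_X_sub_one (1 : R))

theorem natDegree_X_pow_mul_one_sub_X_pow_le {m i : ℕ} (hi : i ≤ m) :
    (X ^ i * (1 - X) ^ (m - i) : R[X]).natDegree ≤ m := by
  compute_degree
  omega

theorem X_pow_mem_span_X_pow_mul_one_sub_X_pow {m j : ℕ} (hj : j ≤ m) :
    (X ^ j : R[X]) ∈
      Submodule.span R (range fun i : Fin (m + 1) => X ^ (i : ℕ) * (1 - X) ^ (m - i)) := by
  have hexpand : (X ^ j : R[X]) = ∑ i ∈ Finset.range (m - j + 1),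
      ((m - j).choose i : R) • (X ^ (j + i) * (1 - X) ^ (m - (j + i))) := by
    calc (X ^ j : R[X]) = X ^ j * (X + (1 - X)) ^ (m - j) := by simp
      _ = _ := by
        rw [add_pow, Finset.mul_sum]
        refine Finset.sum_congr rfl fun i hi => ?_
        rw [Finset.mem_range] at hi
        rw [show m - (j + i) = m - j - i by omega, pow_add, smul_eq_C_mul, map_natCast]
        ring
  rw [hexpand]
  refine Submodule.sum_mem _ fun i hi => Submodule.smul_mem _ _ (Submodule.subset_span ?_)
  rw [Finset.mem_range] at hi
  exact ⟨⟨j + i, by omega⟩, rfl⟩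

theorem mem_span_X_pow_mul_one_sub_X_pow {m : ℕ} {q : R[X]} (hq : q.natDegree ≤ m) :
    q ∈ Submodule.span R (range fun i : Fin (m + 1) => X ^ (i : ℕ) * (1 - X) ^ (m - i)) := by
  rw [q.as_sum_range_C_mul_X_pow' (Nat.lt_succ_of_le hq)]
  refine Submodule.sum_mem _ fun j hj => ?_
  rw [← smul_eq_C_mul]
  exact Submodule.smul_mem _ _
    (X_pow_mem_span_X_pow_mul_one_sub_X_pow (Nat.lt_succ_iff.mp (Finset.mem_range.mp hj)))

end CommRing

theorem eq_zero_of_nonneg_of_intervalIntegral_eq_zero {P : ℝ[X]} {a b : ℝ} (hab : a < b)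
    (hP : ∀ x ∈ Ioc a b, 0 ≤ P.eval x) (h : ∫ x in a..b, P.eval x = 0) : P = 0 := by
  rw [intervalIntegral.integral_eq_zero_iff_of_le_of_nonneg_ae hab.le
    (ae_restrict_of_forall_mem measurableSet_Ioc hP) (P.continuous.intervalIntegrable a b)] at h
  have hroots : EqOn (fun x => P.eval x) 0 (Ioc a b) :=
    Measure.eqOn_Ioc_of_ae_eq _ h P.continuous.continuousOn continuousOn_const
  exact P.eq_zero_of_infinite_isRoot ((Ioc_infinite hab).mono hroots)

end Polynomial

theorem intervalIntegral_mul_eval_eq_zero_of_natDegree_le {g : ℝ → ℝ} {a b : ℝ}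
    (hg : IntervalIntegrable g volume a b) {m : ℕ}
    (h : ∀ i ≤ m, ∫ t in a..b, g t * (t ^ i * (1 - t) ^ (m - i)) = 0) {q : ℝ[X]}
    (hq : q.natDegree ≤ m) : ∫ t in a..b, g t * q.eval t = 0 := by
  have hint (p : ℝ[X]) : IntervalIntegrable (fun t => g t * p.eval t) volume a b :=
    hg.mul_continuousOn p.continuous.continuousOn
  have hmem := mem_span_X_pow_mul_one_sub_X_pow hq
  clear hq
  induction hmem using Submodule.span_induction with
  | mem p hp =>
    obtain ⟨i, rfl⟩ := hp
    simpa using h i (Nat.lt_succ_iff.mp i.is_lt)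
  | zero => simp
  | add p r _ _ hp hr =>
    simp only [eval_add, mul_add]
    rw [intervalIntegral.integral_add (hint p) (hint r), hp, hr, add_zero]
  | smul c p _ hp =>
    simp only [eval_smul, smul_eq_mul, mul_left_comm (g _), intervalIntegral.integral_const_mul,
      hp, mul_zero]

theorem betaFn_pos {a b : ℝ} (ha : 1 ≤ a) (hb : 1 ≤ b) : 0 < betaFn a b := by
  refine intervalIntegral.intervalIntegral_pos_of_pos_on ?_ (fun t ht => ?_) zero_lt_one
  · exact ((Real.continuous_rpow_const (by linarith)).mul
      ((Real.continuous_rpow_const (by linarith)).comp (continuous_sub_left 1))).intervalIntegrable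
      0 1
  · exact mul_pos (Real.rpow_pos_of_pos ht.1 _) (Real.rpow_pos_of_pos (sub_pos.mpr ht.2) _)

@[simp]
theorem Ffun_index_zero (n : ℕ) (ρ : ℝ) (f : ℝ → ℝ) : Ffun n 0 ρ f = f 0 := if_pos rfl

theorem Ffun_index_self {n : ℕ} (hn : n ≠ 0) (ρ : ℝ) (f : ℝ → ℝ) :
    Ffun n n ρ f = f 1 := by
  rw [Ffun, if_neg hn, if_pos rfl]

theorem Ffun_one_of_pos_of_lt {n k : ℕ} (hk : 0 < k) (hkn : k < n) (f : ℝ → ℝ) :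
    Ffun n k 1 f = (betaFn k (n - k))⁻¹ *
      ∫ t in (0:ℝ)..1, t ^ (k - 1) * (1 - t) ^ (n - k - 1) * f t := by
  have hk' : (k : ℝ) - 1 = ((k - 1 : ℕ) : ℝ) := by
    rw [Nat.cast_sub hk]; simp
  have hnk : (n : ℝ) - k - 1 = ((n - k - 1 : ℕ) : ℝ) := by
    rw [Nat.cast_sub (by omega), Nat.cast_sub hkn.le]; simp
  simp only [Ffun, hk.ne', hkn.ne, if_false, mul_one, hk', hnk, Real.rpow_natCast]

theorem Ffun_one_eq_zero_iff {n k : ℕ} (hk : 0 < k) (hkn : k < n) (f : ℝ → ℝ) :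
    Ffun n k 1 f = 0 ↔ ∫ t in (0:ℝ)..1, t ^ (k - 1) * (1 - t) ^ (n - k - 1) * f t = 0 := by
  have hB : 0 < betaFn k (n - k) := betaFn_pos (by exact_mod_cast hk)
    (by rw [le_sub_iff_add_le]; exact_mod_cast Nat.one_add_le_iff.mpr hkn)
  rw [Ffun_one_of_pos_of_lt hk hkn, mul_eq_zero, or_iff_right (inv_ne_zero hB.ne')]

theorem Ffun_one_sub {f g : ℝ → ℝ} (hf : Continuous f) (hg : Continuous g) {n k : ℕ}
    (hkn : k ≤ n) : Ffun n k 1 (fun t => f t - g t) = Ffun n k 1 f - Ffun n k 1 g := by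
  rcases Nat.eq_zero_or_pos k with rfl | hk
  · simp
  rcases hkn.lt_or_eq with hkn | rfl
  · have hint (h : ℝ → ℝ) (hh : Continuous h) : IntervalIntegrable
        (fun t : ℝ => t ^ (k - 1) * (1 - t) ^ (n - k - 1) * h t) volume 0 1 :=
      (by fun_prop : Continuous _).intervalIntegrable 0 1
    simp only [Ffun_one_of_pos_of_lt hk hkn, mul_sub,
      intervalIntegral.integral_sub (hint f hf) (hint g hg)]
  · simp [Ffun_index_self hk.ne']

theorem Ffun_one_X_mul_X_sub_one_mul_eq_zero_iff {m i : ℕ} (hi : i ≤ m) (M : ℝ[X]) :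
    Ffun (m + 2) (i + 1) 1 (fun t => (X * (X - 1) * M).eval t) = 0 ↔
      ∫ t in (0:ℝ)..1, t * (1 - t) * M.eval t * (t ^ i * (1 - t) ^ (m - i)) = 0 := by
  have hexp : m + 2 - (i + 1) - 1 = m - i := by omega
  have hint (t : ℝ) :
      t ^ (i + 1 - 1) * (1 - t) ^ (m + 2 - (i + 1) - 1) * (X * (X - 1) * M).eval t =
        -(t * (1 - t) * M.eval t * (t ^ i * (1 - t) ^ (m - i))) := by
    simp only [Nat.add_sub_cancel, hexp, eval_mul, eval_sub, eval_X, eval_one]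
    ring
  rw [Ffun_one_eq_zero_iff i.succ_pos (by omega)]
  simp only [hint, intervalIntegral.integral_neg, neg_eq_zero]

theorem Ffun_one_X_mul_X_sub_one_mul_eq_zero {m : ℕ} {J : ℝ[X]}
    (horth : ∀ q : ℝ[X], q.natDegree ≤ m →
      ∫ t in (0:ℝ)..1, t * (1 - t) * J.eval t * q.eval t = 0)
    {k : ℕ} (hk : k ≤ m + 2) : Ffun (m + 2) k 1 (fun t => (X * (X - 1) * J).eval t) = 0 := by
  rcases k with _ | i
  · simp
  rcases (show i ≤ m ∨ i = m + 1 by omega) with hi | rfl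
  · rw [Ffun_one_X_mul_X_sub_one_mul_eq_zero_iff hi]
    simpa using horth _ (natDegree_X_pow_mul_one_sub_X_pow_le hi)
  · simp [Ffun_index_self]

theorem eq_zero_of_forall_Ffun_one_eq_zero {m : ℕ} {L : ℝ[X]} (hL : L.natDegree ≤ m + 2)
    (h : ∀ k ≤ m + 2, Ffun (m + 2) k 1 (fun t => L.eval t) = 0) : L = 0 := by
  obtain ⟨M, rfl⟩ := X_mul_X_sub_one_dvd (by simpa using h 0 (by omega))
    (by simpa [Ffun_index_self] using h (m + 2) le_rfl)
  rcases eq_or_ne M 0 with rfl | hM0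
  · simp
  have hM : M.natDegree ≤ m := by
    rw [isMonicOfDegree_X_mul_X_sub_one.monic.natDegree_mul' hM0,
      isMonicOfDegree_X_mul_X_sub_one.natDegree_eq] at hL
    omega
  have horth (i : ℕ) (hi : i ≤ m) :
      ∫ t in (0:ℝ)..1, t * (1 - t) * M.eval t * (t ^ i * (1 - t) ^ (m - i)) = 0 :=
    (Ffun_one_X_mul_X_sub_one_mul_eq_zero_iff hi M).mp (h (i + 1) (by omega))
  have hnorm : ∫ t in (0:ℝ)..1, t * (1 - t) * M.eval t * M.eval t = 0 :=
    intervalIntegral_mul_eval_eq_zero_of_natDegree_le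
      ((by fun_prop : Continuous _).intervalIntegrable 0 1) horth hM
  have hweighted : X * (1 - X) * M ^ 2 = 0 := by
    refine eq_zero_of_nonneg_of_intervalIntegral_eq_zero zero_lt_one (fun t ht => ?_) ?_
    · simp only [eval_mul, eval_pow, eval_sub, eval_one, eval_X]
      exact mul_nonneg (mul_nonneg ht.1.le (sub_nonneg.mpr ht.2)) (sq_nonneg _)
    · simpa [sq, mul_assoc] using hnorm
  have h1X : (1 - X : ℝ[X]) ≠ 0 := fun h => by simpa using congrArg (eval 0) h
  simp [X_ne_zero, h1X, hM0] at hweighted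

/-- Let `n ≥ 2` and let `J` be the monic Jacobi polynomial of degree `n−1`,
orthogonal on `[0,1]` with respect to the weight `t(1−t)`. Set `u(t) = t(t−1)J(t)`.
Then `F_{n,k}^1(u) = 0` for all `k`, hence `L_n^1 u = 0` and
`u = e_{n+1} − L_n^1 e_{n+1}`. -/
theorem jacobi_u (n : ℕ) (hn : 2 ≤ n)
    (J : Polynomial ℝ) (hmonic : J.Monic) (hdeg : J.natDegree = n - 1)
    (horth : ∀ q : Polynomial ℝ, q.natDegree ≤ n - 2 →
      ∫ t in (0:ℝ)..1, t * (1 - t) * J.eval t * q.eval t = 0) :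
    (∀ k ≤ n, Ffun n k 1
      (fun t => (Polynomial.X * (Polynomial.X - 1) * J).eval t) = 0) ∧
    (∀ L : Polynomial ℝ, L.natDegree ≤ n →
      (∀ k ≤ n, Ffun n k 1 (fun t => L.eval t) =
        Ffun n k 1 (fun t => (Polynomial.X * (Polynomial.X - 1) * J).eval t)) →
      L = 0) ∧
    (∀ L' : Polynomial ℝ, L'.natDegree ≤ n →
      (∀ k ≤ n, Ffun n k 1 (fun t => L'.eval t) = Ffun n k 1 (fun t => t ^ (n + 1))) →
      Polynomial.X * (Polynomial.X - 1) * J = Polynomial.X ^ (n + 1) - L') := by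
  obtain ⟨m, rfl⟩ := Nat.exists_eq_add_of_le' hn
  have hvanish (k : ℕ) (hk : k ≤ m + 2) :=
    Ffun_one_X_mul_X_sub_one_mul_eq_zero (J := J) (by simpa using horth) hk
  refine ⟨hvanish, fun L hL hF => eq_zero_of_forall_Ffun_one_eq_zero hL fun k hk =>
    (hF k hk).trans (hvanish k hk), fun L' hL' hF' => ?_⟩
  have hu : IsMonicOfDegree (X * (X - 1) * J) (m + 2 + 1) := by
    have hJ : IsMonicOfDegree J (m + 1) := ⟨hdeg, hmonic⟩
    simpa [add_comm, add_left_comm] using isMonicOfDegree_X_mul_X_sub_one.mul hJ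
  have hdiff : X ^ (m + 2 + 1) - X * (X - 1) * J - L' = 0 := by
    refine eq_zero_of_forall_Ffun_one_eq_zero ((natDegree_sub_le _ _).trans (max_le ?_ hL'))
      fun k hk => ?_
    · exact Nat.le_of_lt_succ ((isMonicOfDegree_X_pow ℝ _).natDegree_sub_lt (by omega) hu)
    · simp only [eval_sub]
      rw [Ffun_one_sub (by fun_prop) (by fun_prop) hk, Ffun_one_sub (by fun_prop) (by fun_prop) hk,
        hvanish k hk, hF' k hk]
      simp
  linear_combination -hdiff
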